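/- For the holomorphic map H : ℍ₂ → ℂ², H(z₁,z₂) = (-1/z₁, z₂/(2z₁²)), and any γ ∈ ℂ, the slice h_γ(ζ) = H₁(φ_γ(ζ)) - 2iγ̄·H₂(φ_γ(ζ)) with φ_γ(ζ) = (ζ + i|γ|², γ) equals h_γ(ζ) = (-ζ - 2i|γ|²)/(ζ + i|γ|²)², and for ζ = x + iy ∈ ℍ we have Im(h_γ(ζ)) = (y(x²+y²) + 4y²|γ|² + 5y|γ|⁴ + 2|γ|⁶)/|ζ + i|γ|²|⁴ > 0. -/

import Mathlib

open Complex

/-!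
Since `γ̄ γ = |γ|²`, the two terms of the slice combine over the common denominator
`w² = (ζ + i|γ|²)²`. Multiplying by `w̄²` turns the denominator into `|w|⁴`, and the imaginary
part of `(-ζ - 2i|γ|²) w̄²` is `x²y + (y + 2|γ|²)(y + |γ|²)²`, which is positive for `y > 0`.
-/

theorem im_div_sq (z w : ℂ) :
    (z / w ^ 2).im = (z * (starRingEnd ℂ) w ^ 2).im / ‖w‖ ^ 4 := by
  rcases eq_or_ne w 0 with rfl | hw
  · simp
  have hw' : (starRingEnd ℂ) w ≠ 0 := (map_ne_zero _).mpr hw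
  have : z / w ^ 2 = z * (starRingEnd ℂ) w ^ 2 / ((‖w‖ ^ 4 : ℝ) : ℂ) := by
    rw [ofReal_pow, show (‖w‖ : ℂ) ^ 4 = (w * (starRingEnd ℂ) w) ^ 2 by rw [mul_conj']; ring]
    field_simp
  rw [this, div_ofReal_im]

theorem slice_eq_div_sq (γ ζ : ℂ) (hw : ζ + I * ((‖γ‖ ^ 2 : ℝ) : ℂ) ≠ 0) :
    -1 / (ζ + I * ((‖γ‖ ^ 2 : ℝ) : ℂ))
      - 2 * I * (starRingEnd ℂ) γ * (γ / (2 * (ζ + I * ((‖γ‖ ^ 2 : ℝ) : ℂ)) ^ 2))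
      = (-ζ - 2 * I * ((‖γ‖ ^ 2 : ℝ) : ℂ)) / (ζ + I * ((‖γ‖ ^ 2 : ℝ) : ℂ)) ^ 2 := by
  have hγ : (starRingEnd ℂ) γ * γ = ((‖γ‖ ^ 2 : ℝ) : ℂ) := by
    rw [conj_mul', ofReal_pow]
  field_simp
  linear_combination (-I) * hγ

theorem im_slice_div_sq (ζ : ℂ) (r : ℝ) :
    ((-ζ - 2 * I * ((r ^ 2 : ℝ) : ℂ)) / (ζ + I * ((r ^ 2 : ℝ) : ℂ)) ^ 2).im
      = (ζ.im * (ζ.re ^ 2 + ζ.im ^ 2) + 4 * ζ.im ^ 2 * r ^ 2 + 5 * ζ.im * r ^ 4 + 2 * r ^ 6)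
        / ‖ζ + I * ((r ^ 2 : ℝ) : ℂ)‖ ^ 4 := by
  rw [im_div_sq]
  congr 1
  simp only [pow_two, map_mul, map_add, conj_I, conj_ofReal, mul_re, mul_im, add_re, add_im,
    sub_re, sub_im, neg_re, neg_im, I_re, I_im, ofReal_re, ofReal_im, conj_re, conj_im,
    re_ofNat, im_ofNat]
  ring

theorem slice_example (γ ζ : ℂ) (hζ : 0 < ζ.im) :
    (-1 / (ζ + I * ((‖γ‖ ^ 2 : ℝ) : ℂ))
      - 2 * I * (starRingEnd ℂ) γ * (γ / (2 * (ζ + I * ((‖γ‖ ^ 2 : ℝ) : ℂ)) ^ 2)))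
      = (-ζ - 2 * I * ((‖γ‖ ^ 2 : ℝ) : ℂ))
          / (ζ + I * ((‖γ‖ ^ 2 : ℝ) : ℂ)) ^ 2 ∧
    ((-ζ - 2 * I * ((‖γ‖ ^ 2 : ℝ) : ℂ))
        / (ζ + I * ((‖γ‖ ^ 2 : ℝ) : ℂ)) ^ 2).im
      = (ζ.im * (ζ.re ^ 2 + ζ.im ^ 2) + 4 * ζ.im ^ 2 * ‖γ‖ ^ 2
          + 5 * ζ.im * ‖γ‖ ^ 4 + 2 * ‖γ‖ ^ 6)
        / ‖ζ + I * ((‖γ‖ ^ 2 : ℝ) : ℂ)‖ ^ 4 ∧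
    0 < ((-ζ - 2 * I * ((‖γ‖ ^ 2 : ℝ) : ℂ))
        / (ζ + I * ((‖γ‖ ^ 2 : ℝ) : ℂ)) ^ 2).im := by
  have hw_im : 0 < (ζ + I * ((‖γ‖ ^ 2 : ℝ) : ℂ)).im := by
    simp only [add_im, mul_im, I_re, I_im, ofReal_re, ofReal_im]
    positivity
  have hw : ζ + I * ((‖γ‖ ^ 2 : ℝ) : ℂ) ≠ 0 := fun h ↦ hw_im.ne' (by rw [h, zero_im])
  refine ⟨slice_eq_div_sq γ ζ hw, im_slice_div_sq ζ ‖γ‖, ?_⟩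
  rw [im_slice_div_sq]
  positivity
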